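/- Let f : ℝⁿ → ℝ be locally Lipschitz and upper-C¹ at every point of an open set Ω (i.e., −f is approximately convex on Ω). Then the standard model φ♯(y,x) = f(x) + f⁰(x,y−x) is strict on Ω: for every x₀ ∈ Ω and ε > 0 there exists δ > 0 such that f(y) ≤ φ♯(y,x) + ε‖y−x‖ for all x,y ∈ B(x₀,δ). -/

import Mathlib

open Metric Set Filter
open scoped Topology RealInnerProductSpace

/- The Clarke derivative dominates every lower bound of the one-sided difference quotients of
`f` at `x` itself, since `(x, t)` with `t ↓ 0` runs inside the filter defining it; local Lipschitz
continuity bounds the quotients above, so the limsup is not a junk value. Approximate concavity of `f` along the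
segment `[x, y]` bounds these quotients below by `f y - f x - ε ‖y - x‖`. -/

/-- The Clarke directional derivative of `f` at `x` in direction `d`. -/
noncomputable def clarkeDeriv {E : Type*} [NormedAddCommGroup E] [NormedSpace ℝ E]
    (f : E → ℝ) (x d : E) : ℝ :=
  Filter.limsup (fun p : E × ℝ => (f (p.1 + p.2 • d) - f p.1) / p.2)
    ((nhds x) ×ˢ (nhdsWithin 0 (Set.Ioi 0)))

variable {E : Type*} [NormedAddCommGroup E] [NormedSpace ℝ E]

lemma LipschitzOnWith.isBoundedUnder_le_diffQuotient {f : E → ℝ} {x : E} {K : NNReal}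
    {s : Set E} (hK : LipschitzOnWith K f s) (hs : s ∈ 𝓝 x) (d : E) :
    IsBoundedUnder (· ≤ ·) ((𝓝 x) ×ˢ (𝓝[>] (0 : ℝ)))
      (fun p : E × ℝ => (f (p.1 + p.2 • d) - f p.1) / p.2) := by
  refine ⟨K * ‖d‖, eventually_map.2 ?_⟩
  have hshift : Tendsto (fun p : E × ℝ => p.1 + p.2 • d) ((𝓝 x) ×ˢ (𝓝[>] (0 : ℝ))) (𝓝 x) := by
    have hcont : Tendsto (fun p : E × ℝ => p.1 + p.2 • d) (𝓝 (x, 0)) (𝓝 x) :=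
      (by fun_prop : Continuous fun p : E × ℝ => p.1 + p.2 • d).tendsto' _ _ (by simp)
    exact hcont.mono_left (nhds_prod_eq (x := x) (y := (0 : ℝ)) ▸
      prod_mono le_rfl nhdsWithin_le_nhds)
  filter_upwards [hshift.eventually_mem hs, tendsto_fst.eventually_mem hs,
    tendsto_snd.eventually (self_mem_nhdsWithin (s := Ioi (0 : ℝ)))] with p hps hp hpos
  rw [div_le_iff₀ hpos]
  calc f (p.1 + p.2 • d) - f p.1 ≤ K * dist (p.1 + p.2 • d) p.1 :=
        (le_abs_self _).trans (hK.dist_le_mul _ hps _ hp)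
    _ = K * ‖d‖ * p.2 := by
        rw [dist_eq_norm, add_sub_cancel_left, norm_smul, Real.norm_of_nonneg hpos.le]; ring

lemma le_clarkeDeriv_of_eventually_le {f : E → ℝ} (hf : LocallyLipschitz f) {x d : E} {c : ℝ}
    (h : ∀ᶠ t in 𝓝[>] (0 : ℝ), c ≤ (f (x + t • d) - f x) / t) :
    c ≤ clarkeDeriv f x d := by
  obtain ⟨K, s, hs, hK⟩ := hf x
  have hx : Tendsto (fun t : ℝ => (x, t)) (𝓝[>] 0) ((𝓝 x) ×ˢ (𝓝[>] (0 : ℝ))) :=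
    tendsto_const_nhds.prodMk tendsto_id
  exact le_limsup_of_frequently_le
    (hx.frequently (p := fun p : E × ℝ => c ≤ (f (p.1 + p.2 • d) - f p.1) / p.2) h.frequently)
    (hK.isBoundedUnder_le_diffQuotient hs d)

lemma sub_sub_le_slope_of_approxConcave {f : E → ℝ} {x y : E} {ε t : ℝ} (hε : 0 ≤ ε)
    (ht : t ∈ Ioc (0 : ℝ) 1)
    (hconv : -(f (t • y + (1 - t) • x)) ≤ t * (-(f y)) + (1 - t) * (-(f x)) +
      ε * (t * (1 - t)) * ‖y - x‖) :
    f y - f x - ε * ‖y - x‖ ≤ (f (x + t • (y - x)) - f x) / t := by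
  obtain ⟨ht0, ht1⟩ := ht
  have hseg : x + t • (y - x) = t • y + (1 - t) • x := by module
  rw [le_div_iff₀ ht0, hseg]
  nlinarith [mul_nonneg (mul_nonneg hε (mul_pos ht0 ht0).le) (norm_nonneg (y - x))]

theorem stmt_9_general (n : ℕ) (f : EuclideanSpace ℝ (Fin n) → ℝ) (hf : LocallyLipschitz f)
    (Ω : Set (EuclideanSpace ℝ (Fin n)))
    (hupperC1 : ∀ x ∈ Ω, ∀ ε > (0:ℝ), ∃ δ > (0:ℝ), ∀ y ∈ ball x δ, ∀ z ∈ ball x δ,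
      ∀ t ∈ Icc (0:ℝ) 1,
        -(f (t • y + (1 - t) • z)) ≤ t * (-(f y)) + (1 - t) * (-(f z)) +
          ε * (t * (1 - t)) * ‖y - z‖)
    (φ : EuclideanSpace ℝ (Fin n) → EuclideanSpace ℝ (Fin n) → ℝ)
    (hφ : ∀ y x, φ y x = f x + clarkeDeriv f x (y - x)) :
    ∀ x₀ ∈ Ω, ∀ ε > (0:ℝ), ∃ δ > (0:ℝ), ∀ x ∈ ball x₀ δ, ∀ y ∈ ball x₀ δ,
      f y ≤ φ y x + ε * ‖y - x‖ := by
  intro x₀ hx₀ ε hε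
  obtain ⟨δ, hδ, hconv⟩ := hupperC1 x₀ hx₀ ε hε
  refine ⟨δ, hδ, fun x hx y hy => ?_⟩
  have hslope : ∀ᶠ t in 𝓝[>] (0 : ℝ),
      f y - f x - ε * ‖y - x‖ ≤ (f (x + t • (y - x)) - f x) / t := by
    filter_upwards [Ioc_mem_nhdsGT (zero_lt_one' ℝ)] with t ht
    exact sub_sub_le_slope_of_approxConcave hε.le ht (hconv y hy x hx t (Ioc_subset_Icc_self ht))
  rw [hφ]
  linarith [le_clarkeDeriv_of_eventually_le hf hslope]

theorem stmt_9 (n : ℕ) (f : EuclideanSpace ℝ (Fin n) → ℝ) (hf : LocallyLipschitz f)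
    (Ω : Set (EuclideanSpace ℝ (Fin n))) (hΩ : IsOpen Ω)
    (hupperC1 : ∀ x ∈ Ω, ∀ ε > (0:ℝ), ∃ δ > (0:ℝ), ∀ y ∈ ball x δ, ∀ z ∈ ball x δ,
      ∀ t ∈ Icc (0:ℝ) 1,
        -(f (t • y + (1 - t) • z)) ≤ t * (-(f y)) + (1 - t) * (-(f z)) +
          ε * (t * (1 - t)) * ‖y - z‖)
    (φ : EuclideanSpace ℝ (Fin n) → EuclideanSpace ℝ (Fin n) → ℝ)
    (hφ : ∀ y x, φ y x = f x + clarkeDeriv f x (y - x)) :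
    ∀ x₀ ∈ Ω, ∀ ε > (0:ℝ), ∃ δ > (0:ℝ), ∀ x ∈ ball x₀ δ, ∀ y ∈ ball x₀ δ,
      f y ≤ φ y x + ε * ‖y - x‖ :=
  stmt_9_general n f hf Ω hupperC1 φ hφ
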